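/- arXiv:2103.08280 — 2 statements merged into one kernel-verified Lean document; each statement's English description precedes it below -/
import Mathlib

section
/- For all integers m ≥ 2 and j ≥ 1 and all p_1, …, p_m ∈ (0,1], one has f_{m,j}(p_1, …, p_m) ≥ f_{m,j}(p̄, …, p̄), where p̄ = (p_1 + ⋯ + p_m)/m. -/
open MeasureTheory

/-- The law of a geometric random variable with success probability `p`,
supported on the positive integers: `P(Y = k) = (1 - p)^(k-1) * p` for `k ≥ 1`. -/
noncomputable def geomMeasure (p : ℝ) : Measure ℕ :=
  Measure.count.withDensity
    (fun k => if 1 ≤ k then ENNReal.ofReal ((1 - p) ^ (k - 1) * p) else 0)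

/-- `f_{m,j}(p_1, …, p_m) = P(Y_1 + ⋯ + Y_m > j)` where `Y_1, …, Y_m` are independent
with `Y_i ~ Geom(p_i)`; realized via the product of the geometric laws. -/
noncomputable def geomF (m j : ℕ) (p : Fin m → ℝ) : ENNReal :=
  Measure.pi (fun i => geomMeasure (p i)) {x | j < ∑ i, x i}

/-!
It suffices to balance two coordinates at a time.  Conditioning on the other coordinates, this
comes down to `P(Y₁ + Y₂ > n)` not increasing when `(p₁, p₂)` is replaced by a pair with the
same sum and a larger product.  With `a = 1 - p₁` and `b = 1 - p₂` these tails are the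
coefficients of `(1 + (1 - a - b) X) / ((1 - a X) (1 - b X))`; the denominator is
`1 - (a + b) X + a b X²`, so the difference of the two generating functions is `(a'b' - ab) X²`
times a series with nonnegative coefficients.  Each balancing step can make one more coordinate
equal to the mean, so finitely many steps reach the constant vector.
-/

open Set ENNReal PowerSeries

variable {ι κ : Type*} [Fintype ι] [Fintype κ]

def IsRobinHoodStep (p q : ι → ℝ) : Prop :=
  ∃ i t, i ≠ t ∧ (∀ l, l ≠ i → l ≠ t → q l = p l) ∧ q i + q t = p i + p t ∧
    p i * p t ≤ q i * q t

lemma exists_isRobinHoodStep_card_lt {s : Set ℝ} (hs : s.OrdConnected) {c : ℝ} {p : ι → ℝ}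
    (hp : ∀ i, p i ∈ s) (hsum : ∑ i, p i = Fintype.card ι * c) {i : ι} (hi : p i ≠ c) :
    ∃ q : ι → ℝ, (∀ l, q l ∈ s) ∧ IsRobinHoodStep p q ∧ ∑ l, q l = Fintype.card ι * c ∧
      Finset.card {l | q l ≠ c} < Finset.card {l | p l ≠ c} := by
  classical
  obtain ⟨t, ht⟩ : ∃ t, (p i - c) * (p t - c) < 0 := by
    by_contra! h
    have hzero : ∑ t, (p i - c) * (p t - c) = 0 := by
      rw [← Finset.mul_sum, Finset.sum_sub_distrib, hsum]
      simp
    have := (Finset.sum_eq_zero_iff_of_nonneg fun t _ => h t).1 hzero i (Finset.mem_univ i)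
    exact hi (sub_eq_zero.1 (mul_self_eq_zero.1 this))
  have hit : i ≠ t := by
    rintro rfl
    nlinarith [mul_self_nonneg (p i - c)]
  have hpt : p t ≠ c := fun h => by simp [h] at ht
  have hbetween : c ∈ uIcc (p i) (p t) ∧ p t + p i - c ∈ uIcc (p i) (p t) := by
    simp only [mem_uIcc]
    rcases mul_neg_iff.1 ht with ⟨h1, h2⟩ | ⟨h1, h2⟩
    · exact ⟨Or.inr ⟨by linarith, by linarith⟩, Or.inr ⟨by linarith, by linarith⟩⟩
    · exact ⟨Or.inl ⟨by linarith, by linarith⟩, Or.inl ⟨by linarith, by linarith⟩⟩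
  set q : ι → ℝ := fun l => p l + (if l = t then p i - c else 0) - (if l = i then p i - c else 0)
  have hqi : q i = c := by simp [q, hit]
  have hqt : q t = p t + p i - c := by simp [q, hit.symm]; ring
  have hrest : ∀ l, l ≠ i → l ≠ t → q l = p l := fun l hli hlt => by simp [q, hli, hlt]
  refine ⟨q, fun l => ?_, ⟨i, t, hit, hrest, by rw [hqi, hqt]; ring, by rw [hqi, hqt]; nlinarith⟩,
    by simp [q, Finset.sum_add_distrib, Finset.sum_sub_distrib, hsum], ?_⟩
  · by_cases hli : l = i
    · rw [hli, hqi]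
      exact hs.uIcc_subset (hp i) (hp t) hbetween.1
    by_cases hlt : l = t
    · rw [hlt, hqt]
      exact hs.uIcc_subset (hp i) (hp t) hbetween.2
    rw [hrest l hli hlt]
    exact hp l
  · refine Finset.card_lt_card
      (Finset.ssubset_iff_of_subset (fun l => ?_) |>.2 ⟨i, by simpa, by simp [hqi]⟩)
    simp only [Finset.mem_filter, Finset.mem_univ, true_and]
    intro hl
    by_cases hli : l = i
    · exact absurd (hli ▸ hqi) hl
    by_cases hlt : l = t
    · exact hlt ▸ hpt
    rwa [← hrest l hli hlt]

theorem apply_const_le_of_isRobinHoodStep {α : Type*} [Preorder α] {s : Set ℝ}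
    (hs : s.OrdConnected) {F : (ι → ℝ) → α}
    (hF : ∀ p q, (∀ i, p i ∈ s) → (∀ i, q i ∈ s) → IsRobinHoodStep p q → F q ≤ F p)
    (c : ℝ) {p : ι → ℝ} (hp : ∀ i, p i ∈ s) (hsum : ∑ i, p i = Fintype.card ι * c) :
    F (fun _ => c) ≤ F p := by
  induction hn : Finset.card {i | p i ≠ c} using Nat.strong_induction_on generalizing p with
  | _ n ih =>
  by_cases hconst : ∀ i, p i = c
  · rw [show p = fun _ => c from funext hconst]
  obtain ⟨i, hi⟩ := not_forall.1 hconst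
  obtain ⟨q, hq, hstep, hsum', hcard⟩ := exists_isRobinHoodStep_card_lt hs hp hsum hi
  exact (ih _ (hn ▸ hcard) hq hsum' rfl).trans (hF p q hp hq hstep)

theorem apply_mean_le_of_isRobinHoodStep {α : Type*} [Preorder α] {s : Set ℝ}
    (hs : s.OrdConnected) {F : (ι → ℝ) → α}
    (hF : ∀ p q, (∀ i, p i ∈ s) → (∀ i, q i ∈ s) → IsRobinHoodStep p q → F q ≤ F p)
    {p : ι → ℝ} (hp : ∀ i, p i ∈ s) : F (fun _ => (∑ i, p i) / Fintype.card ι) ≤ F p := by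
  cases isEmpty_or_nonempty ι
  · exact (congrArg F (Subsingleton.elim _ _)).le
  · exact apply_const_le_of_isRobinHoodStep hs hF _ hp (by field_simp)

noncomputable def geomSeries (a : ℝ) : ℝ⟦X⟧ := mk (a ^ ·)

@[simp] lemma coeff_geomSeries (a : ℝ) (n : ℕ) : coeff n (geomSeries a) = a ^ n := coeff_mk _ _

@[simp] lemma constantCoeff_geomSeries (a : ℝ) : constantCoeff (geomSeries a) = 1 := by
  rw [← coeff_zero_eq_constantCoeff_apply, coeff_geomSeries, pow_zero]

lemma one_sub_C_mul_X_mul_geomSeries (a : ℝ) : (1 - C a * X) * geomSeries a = 1 := by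
  ext (_ | n) <;> simp [sub_mul, mul_assoc, coeff_succ_X_mul, pow_succ']

lemma geomSeries_mul_geomSeries_sub {a b a' b' : ℝ} (hs : a + b = a' + b') :
    geomSeries a * geomSeries b - geomSeries a' * geomSeries b'
      = C (a' * b' - a * b) * X ^ 2 * (geomSeries a * geomSeries b)
          * (geomSeries a' * geomSeries b') := by
  have hsC : C a + C b = C a' + C b' := by simp only [← map_add, hs]
  have ha := one_sub_C_mul_X_mul_geomSeries a
  have hb := one_sub_C_mul_X_mul_geomSeries b
  have ha' := one_sub_C_mul_X_mul_geomSeries a'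
  have hb' := one_sub_C_mul_X_mul_geomSeries b'
  simp only [map_sub, map_mul]
  set H := geomSeries a * geomSeries b
  set H' := geomSeries a' * geomSeries b'
  linear_combination H' * ((1 - C b * X) * geomSeries b * ha + hb)
    - H * ((1 - C b' * X) * geomSeries b' * ha' + hb') + H * H' * X * hsC

/-- Its `n`-th coefficient is `P(Y₁ + Y₂ > n)` for independent `Y₁ ~ Geom(1 - a)` and
`Y₂ ~ Geom(1 - b)` (see `tsum_tsum_ite_geomMeasure`). -/
noncomputable def geomPairTailSeries (a b : ℝ) : ℝ⟦X⟧ :=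
  (1 + C (1 - (a + b)) * X) * (geomSeries a * geomSeries b)

lemma one_sub_C_mul_X_mul_geomPairTailSeries (a b : ℝ) :
    (1 - C a * X) * geomPairTailSeries a b = 1 + C (1 - a) * X * geomSeries b := by
  have ha := one_sub_C_mul_X_mul_geomSeries a
  have hb := one_sub_C_mul_X_mul_geomSeries b
  simp only [geomPairTailSeries, map_sub, map_add, map_one]
  linear_combination (1 + (1 - (C a + C b)) * X) * geomSeries b * ha + hb

lemma coeff_geomPairTailSeries_zero (a b : ℝ) : coeff 0 (geomPairTailSeries a b) = 1 := by
  simp [geomPairTailSeries]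

lemma coeff_geomPairTailSeries_succ (a b : ℝ) (n : ℕ) :
    coeff (n + 1) (geomPairTailSeries a b)
      = a * coeff n (geomPairTailSeries a b) + (1 - a) * b ^ n := by
  have h := congrArg (coeff (n + 1)) (one_sub_C_mul_X_mul_geomPairTailSeries a b)
  simp [sub_mul, mul_assoc, coeff_succ_X_mul] at h
  linarith

lemma coeff_geomPairTailSeries_nonneg {a b : ℝ} (ha : 0 ≤ a) (ha1 : a ≤ 1) (hb : 0 ≤ b)
    (n : ℕ) : 0 ≤ coeff n (geomPairTailSeries a b) := by
  induction n with
  | zero => simp [coeff_geomPairTailSeries_zero]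
  | succ n ih =>
    rw [coeff_geomPairTailSeries_succ]
    have := sub_nonneg.2 ha1
    positivity

lemma coeff_mul_nonneg {φ ψ : ℝ⟦X⟧} (hφ : ∀ n, 0 ≤ coeff n φ) (hψ : ∀ n, 0 ≤ coeff n ψ)
    (n : ℕ) : 0 ≤ coeff n (φ * ψ) := by
  rw [coeff_mul]
  exact Finset.sum_nonneg fun x _ => mul_nonneg (hφ _) (hψ _)

lemma coeff_geomPairTailSeries_le {a b a' b' : ℝ} (ha : 0 ≤ a) (ha1 : a ≤ 1) (hb : 0 ≤ b)
    (ha' : 0 ≤ a') (hb' : 0 ≤ b') (hs : a + b = a' + b') (hprod : a * b ≤ a' * b') (n : ℕ) :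
    coeff n (geomPairTailSeries a' b') ≤ coeff n (geomPairTailSeries a b) := by
  have hdiff : geomPairTailSeries a b - geomPairTailSeries a' b'
      = C (a' * b' - a * b)
          * (X ^ 2 * geomPairTailSeries a b * (geomSeries a' * geomSeries b')) := by
    rw [geomPairTailSeries, geomPairTailSeries, ← hs, ← mul_sub, geomSeries_mul_geomSeries_sub hs]
    ring
  have hnonneg :
      0 ≤ coeff n (X ^ 2 * geomPairTailSeries a b * (geomSeries a' * geomSeries b')) := by
    refine coeff_mul_nonneg
      (coeff_mul_nonneg (fun k => ?_) (coeff_geomPairTailSeries_nonneg ha ha1 hb))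
      (coeff_mul_nonneg (fun k => ?_) (fun k => ?_)) n
    · rw [coeff_X_pow]
      positivity
    all_goals
      simp only [coeff_geomSeries]
      positivity
  have := congrArg (coeff n) hdiff
  rw [map_sub, coeff_C_mul] at this
  linarith [mul_nonneg (sub_nonneg.2 hprod) hnonneg]

lemma geomMeasure_singleton (p : ℝ) (k : ℕ) :
    geomMeasure p {k} = if 1 ≤ k then ENNReal.ofReal ((1 - p) ^ (k - 1) * p) else 0 := by
  rw [geomMeasure, withDensity_apply _ (measurableSet_singleton k), Measure.restrict_singleton,
    Measure.count_singleton, one_smul, lintegral_dirac]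

@[simp] lemma geomMeasure_singleton_zero (p : ℝ) : geomMeasure p {0} = 0 := by
  simp [geomMeasure_singleton]

@[simp] lemma geomMeasure_singleton_succ (p : ℝ) (k : ℕ) :
    geomMeasure p {k + 1} = ENNReal.ofReal ((1 - p) ^ k * p) := by
  simp [geomMeasure_singleton]

lemma isProbabilityMeasure_geomMeasure {p : ℝ} (hp : p ∈ Ioc 0 1) :
    IsProbabilityMeasure (geomMeasure p) := by
  obtain ⟨hp0, hp1⟩ := hp
  constructor
  rw [← Measure.tsum_indicator_apply_singleton _ _ MeasurableSet.univ]
  simp only [indicator_univ]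
  rw [tsum_eq_zero_add' ENNReal.summable, geomMeasure_singleton_zero, zero_add]
  simp only [geomMeasure_singleton_succ]
  rw [← ENNReal.ofReal_tsum_of_nonneg (fun k => by have := sub_nonneg.2 hp1; positivity)
    ((summable_geometric_of_lt_one (by linarith) (by linarith)).mul_right p), tsum_mul_right,
    tsum_geometric_of_lt_one (by linarith) (by linarith), sub_sub_self, inv_mul_cancel₀ hp0.ne',
    ENNReal.ofReal_one]

lemma lintegral_geomMeasure {p : ℝ} (hp1 : p ≤ 1) (f : ℕ → ℝ≥0∞) :
    ∫⁻ k, f k ∂geomMeasure p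
      = ENNReal.ofReal p * f 1 + ENNReal.ofReal (1 - p) * ∫⁻ k, f (k + 1) ∂geomMeasure p := by
  simp only [lintegral_countable']
  rw [tsum_eq_zero_add' ENNReal.summable, tsum_eq_zero_add' ENNReal.summable,
    tsum_eq_zero_add' (f := fun k => f (k + 1) * geomMeasure p {k}) ENNReal.summable]
  simp only [geomMeasure_singleton_zero, geomMeasure_singleton_succ, mul_zero, zero_add, pow_zero,
    one_mul, ← ENNReal.tsum_mul_left]
  congr 1
  · ring
  · refine tsum_congr fun k => ?_
    rw [pow_succ', mul_assoc, ENNReal.ofReal_mul (sub_nonneg.2 hp1)]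
    ring

lemma geomMeasure_Ioi {p : ℝ} (hp : p ∈ Ioc 0 1) (k : ℕ) :
    geomMeasure p (Ioi k) = ENNReal.ofReal ((1 - p) ^ k) := by
  have := isProbabilityMeasure_geomMeasure hp
  induction k with
  | zero =>
    rw [← lintegral_indicator_one measurableSet_Ioi, lintegral_geomMeasure hp.2]
    simp [indicator_of_mem, ← ENNReal.ofReal_add hp.1.le (sub_nonneg.2 hp.2)]
  | succ k ih =>
    have hshift : (fun z : ℕ => (Ioi (k + 1)).indicator 1 (z + 1))
        = (Ioi k).indicator (1 : ℕ → ℝ≥0∞) := by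
      ext z
      simp [indicator_apply]
    rw [← lintegral_indicator_one measurableSet_Ioi, lintegral_geomMeasure hp.2, hshift,
      lintegral_indicator_one measurableSet_Ioi, ih, ← ENNReal.ofReal_mul (sub_nonneg.2 hp.2),
      pow_succ']
    simp

lemma lintegral_geomMeasure_Ioi_sub {p q : ℝ} (hp : p ∈ Ioc 0 1) (hq : q ∈ Ioc 0 1) (n : ℕ) :
    ∫⁻ y, geomMeasure q (Ioi (n - y)) ∂geomMeasure p
      = ENNReal.ofReal (coeff n (geomPairTailSeries (1 - p) (1 - q))) := by
  have := isProbabilityMeasure_geomMeasure hp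
  simp only [geomMeasure_Ioi hq]
  induction n with
  | zero => simp [coeff_geomPairTailSeries_zero]
  | succ n ih =>
    rw [lintegral_geomMeasure hp.2]
    have hq1 : 0 ≤ 1 - q := sub_nonneg.2 hq.2
    have hT := coeff_geomPairTailSeries_nonneg (sub_nonneg.2 hp.2) (sub_le_self 1 hp.1.le) hq1 n
    simp only [Nat.add_sub_add_right, ih, coeff_geomPairTailSeries_succ, Nat.add_sub_cancel,
      ← ENNReal.ofReal_mul hp.1.le, ← ENNReal.ofReal_mul (sub_nonneg.2 hp.2)]
    rw [← ENNReal.ofReal_add (mul_nonneg hp.1.le (pow_nonneg hq1 n))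
      (mul_nonneg (sub_nonneg.2 hp.2) hT), add_comm, sub_sub_self]

lemma tsum_tsum_ite_geomMeasure {p q : ℝ} (hp : p ∈ Ioc 0 1) (hq : q ∈ Ioc 0 1) (n : ℕ) :
    ∑' y, ∑' z, (if n < y + z then geomMeasure p {y} * geomMeasure q {z} else 0)
      = ENNReal.ofReal (coeff n (geomPairTailSeries (1 - p) (1 - q))) := by
  rw [← lintegral_geomMeasure_Ioi_sub hp hq, lintegral_countable']
  refine tsum_congr fun y => ?_
  rw [← Measure.tsum_indicator_apply_singleton _ _ measurableSet_Ioi, mul_comm,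
    ← ENNReal.tsum_mul_left]
  refine tsum_congr fun z => ?_
  -- `n - y` truncates, so the two conditions disagree only at the null point `z = 0`
  rcases z with _ | z
  · simp
  · simp only [indicator_apply, mem_Ioi, mul_ite, mul_zero,
      show n - y < z + 1 ↔ n < y + (z + 1) by omega]

noncomputable def geomSumTail (j : ℕ) (p : ι → ℝ) : ℝ≥0∞ :=
  Measure.pi (fun i => geomMeasure (p i)) {x | j < ∑ i, x i}

lemma geomSumTail_eq_tsum {p : ι → ℝ} (hp : ∀ i, p i ∈ Ioc 0 1) (j : ℕ) :
    geomSumTail j p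
      = ∑' x : ι → ℕ, if j < ∑ i, x i then ∏ i, geomMeasure (p i) {x i} else 0 := by
  have := fun i => isProbabilityMeasure_geomMeasure (hp i)
  rw [geomSumTail, ← Measure.tsum_indicator_apply_singleton _ _ (to_countable _).measurableSet]
  simp [indicator_apply, Measure.pi_singleton]

lemma geomSumTail_comp_equiv (e : κ ≃ ι) {p : ι → ℝ} (hp : ∀ i, p i ∈ Ioc 0 1) (j : ℕ) :
    geomSumTail j (p ∘ e) = geomSumTail j p := by
  rw [geomSumTail_eq_tsum (p := p ∘ e) (fun k => hp (e k)), geomSumTail_eq_tsum hp,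
    ← (e.arrowCongr (Equiv.refl ℕ)).tsum_eq]
  refine tsum_congr fun x => ?_
  simp [← e.symm.sum_comp, ← e.symm.prod_comp]

lemma tsum_tsum_ite_geomMeasure_le {p q p' q' : ℝ} (hp : p ∈ Ioc 0 1) (hq : q ∈ Ioc 0 1)
    (hp' : p' ∈ Ioc 0 1) (hq' : q' ∈ Ioc 0 1) (hsum : p' + q' = p + q) (hprod : p * q ≤ p' * q')
    (n : ℕ) :
    ∑' y, ∑' z, (if n < y + z then geomMeasure p' {y} * geomMeasure q' {z} else 0)
      ≤ ∑' y, ∑' z, (if n < y + z then geomMeasure p {y} * geomMeasure q {z} else 0) := by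
  rw [tsum_tsum_ite_geomMeasure hp hq, tsum_tsum_ite_geomMeasure hp' hq']
  refine ENNReal.ofReal_le_ofReal (coeff_geomPairTailSeries_le ?_ ?_ ?_ ?_ ?_ ?_ ?_ n)
  all_goals linarith [hp.1, hp.2, hq.1, hq.2, hp'.1, hp'.2, hq'.1, hq'.2]

lemma geomSumTail_option_option_le {p q : Option (Option κ) → ℝ} (hp : ∀ i, p i ∈ Ioc 0 1)
    (hq : ∀ i, q i ∈ Ioc 0 1) (hrest : ∀ l, q (some (some l)) = p (some (some l)))
    (hsum : q none + q (some none) = p none + p (some none))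
    (hprod : p none * p (some none) ≤ q none * q (some none)) (j : ℕ) :
    geomSumTail j q ≤ geomSumTail j p := by
  let E : (Option (Option κ) → ℕ) ≃ (κ → ℕ) × ℕ × ℕ :=
    Equiv.piOptionEquivProd.trans ((Equiv.prodCongr (Equiv.refl ℕ) Equiv.piOptionEquivProd).trans
      ((Equiv.prodAssoc _ _ _).symm.trans (Equiv.prodComm _ _)))
  have hsplit : ∀ r : Option (Option κ) → ℝ, (∀ i, r i ∈ Ioc 0 1) → geomSumTail j r
      = ∑' x : κ → ℕ, (∑' y, ∑' z, if j - ∑ l, x l < y + z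
          then geomMeasure (r none) {y} * geomMeasure (r (some none)) {z} else 0)
        * ∏ l, geomMeasure (r (some (some l))) {x l} := by
    intro r hr
    rw [geomSumTail_eq_tsum hr, ← E.symm.tsum_eq, ENNReal.tsum_prod']
    refine tsum_congr fun x => ?_
    rw [ENNReal.tsum_prod', ← ENNReal.tsum_mul_right]
    refine tsum_congr fun y => ?_
    rw [← ENNReal.tsum_mul_right]
    refine tsum_congr fun z => ?_
    simp only [E, Fintype.sum_option, Fintype.prod_option]
    -- as in `tsum_tsum_ite_geomMeasure`, the conditions disagree only at the null point `y = 0`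
    rcases y with _ | y
    · simp
    · simp [show j < y + 1 + (z + ∑ l, x l) ↔ j - ∑ l, x l < y + 1 + z by omega, mul_assoc]
  rw [hsplit q hq, hsplit p hp]
  refine ENNReal.tsum_le_tsum fun x => ?_
  simp only [hrest]
  exact mul_le_mul_left (tsum_tsum_ite_geomMeasure_le (hp _) (hp _) (hq _) (hq _) hsum hprod _) _

lemma geomSumTail_le_of_isRobinHoodStep (j : ℕ) {p q : ι → ℝ} (hp : ∀ i, p i ∈ Ioc 0 1)
    (hq : ∀ i, q i ∈ Ioc 0 1) (h : IsRobinHoodStep p q) : geomSumTail j q ≤ geomSumTail j p := by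
  classical
  obtain ⟨i, t, hit, hrest, hsum, hprod⟩ := h
  let e : Option (Option {l : {l // l ≠ i} // l ≠ ⟨t, hit.symm⟩}) ≃ ι :=
    (Equiv.optionCongr (Equiv.optionSubtypeNe _)).trans (Equiv.optionSubtypeNe i)
  rw [← geomSumTail_comp_equiv e hp, ← geomSumTail_comp_equiv e hq]
  refine geomSumTail_option_option_le (fun _ => hp _) (fun _ => hq _) (fun l => hrest _ l.1.2 ?_)
    hsum hprod j
  exact fun h => l.2 (Subtype.ext h)

theorem geomF_ge_geomF_avg_general
    (m j : ℕ)
    (p : Fin m → ℝ) (hp : ∀ i, p i ∈ Set.Ioc (0 : ℝ) 1) :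
    geomF m j (fun _ => (∑ i, p i) / m) ≤ geomF m j p := by
  have h := apply_mean_le_of_isRobinHoodStep ordConnected_Ioc
    (fun _ _ => geomSumTail_le_of_isRobinHoodStep j) hp
  rwa [Fintype.card_fin] at h

/-- For all integers `m ≥ 2`, `j ≥ 1` and `p_1, …, p_m ∈ (0,1]`,
`f_{m,j}(p_1, …, p_m) ≥ f_{m,j}(p̄, …, p̄)` where `p̄ = (p_1 + ⋯ + p_m)/m`. -/
theorem geomF_ge_geomF_avg
    (m j : ℕ) (hm : 2 ≤ m) (hj : 1 ≤ j)
    (p : Fin m → ℝ) (hp : ∀ i, p i ∈ Set.Ioc (0 : ℝ) 1) :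
    geomF m j (fun _ => (∑ i, p i) / m) ≤ geomF m j p :=
  geomF_ge_geomF_avg_general m j p hp
end

section
/- Assume n ≥ 2, c̃_1 ≥ 0, c̃_2 ≥ 0 and 0 ≤ ζ ≤ √2, and for 1 ≤ i ≤ n define r̃_i : ℝ^m × ℝ^m → ℝ by r̃_i(x,y) = n Σ_{l ∈ L_i, 1 ≤ l ≤ m} y_l ⟨b̃_l, x⟩ + (c̃_1/2)‖x‖² − (c̃_2/2)‖y‖² − n x_1 if i = 1, and the same expression without the term −n x_1 if 2 ≤ i ≤ n. Let 0 ≤ k < m, let (x, y) ∈ F_k × F_{k−1} (with the convention F_{−1} = F_0), let γ > 0, and let 1 ≤ i ≤ n. If i ≡ k+1 (mod n), then ∇_x r̃_i(x,y) ∈ F_{k+1} and ∇_y r̃_i(x,y) ∈ F_k, and the unique pair (u, v) ∈ ℝ^m × ℝ^m satisfying ∇_x r̃_i(u,v) + (1/γ)(u − x) = 0 and ∇_y r̃_i(u,v) − (1/γ)(v − y) = 0 satisfies (u, v) ∈ F_{k+1} × F_k. If i ≢ k+1 (mod n), then ∇_x r̃_i(x,y) ∈ F_k, ∇_y r̃_i(x,y)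 ∈ F_{k−1}, and the corresponding unique pair (u, v) satisfies (u, v) ∈ F_k × F_{k−1}. -/
open scoped RealInnerProductSpace BigOperators

def Fspan (m k : ℕ) : Submodule ℝ (EuclideanSpace ℝ (Fin m)) :=
  Submodule.span ℝ {v | ∃ j : Fin m, (j : ℕ) < k ∧ v = EuclideanSpace.single j 1}

lemma Fspan_mono (m : ℕ) {K K' : ℕ} (h : K ≤ K') : Fspan m K ≤ Fspan m K' :=
  Submodule.span_mono (by rintro v ⟨j, hj, rfl⟩; exact ⟨j, lt_of_lt_of_le hj h, rfl⟩)

lemma single_mem_Fspan {m K : ℕ} (j : Fin m) (h : (j : ℕ) < K) :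
    EuclideanSpace.single j (1:ℝ) ∈ Fspan m K :=
  Submodule.subset_span ⟨j, h, rfl⟩

lemma apply_eq_zero_of_mem_Fspan {m K : ℕ} {v : EuclideanSpace ℝ (Fin m)}
    (hv : v ∈ Fspan m K) (j : Fin m) (hj : K ≤ (j : ℕ)) : v j = 0 := by
  have : Fspan m K ≤ Submodule.mk (AddSubmonoid.mk
      (AddSubsemigroup.mk {v : EuclideanSpace ℝ (Fin m) | ∀ j : Fin m, K ≤ (j:ℕ) → v j = 0}
        (by intro a b ha hb j hj; show a j + b j = 0; rw [ha j hj, hb j hj, add_zero]))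
      (by intro j hj; rfl))
      (by intro c a ha j hj; show c * a j = 0; rw [ha j hj, mul_zero]) := by
    rw [Fspan, Submodule.span_le]
    rintro v ⟨j', hj', rfl⟩ j hj
    have : j ≠ j' := by rintro rfl; omega
    simp [EuclideanSpace.single_apply, this]
  exact this hv j hj

lemma succ_mod_ne {n : ℕ} (hn : 2 ≤ n) (a : ℕ) : (a + 1) % n ≠ a % n := by
  intro h
  have h1 : (n:ℤ) ∣ ((a:ℤ) - ((a:ℕ)+1 : ℕ)) := Nat.ModEq.dvd (show Nat.ModEq n (a+1) a from h)
  have h2 : (n:ℤ) ∣ (-1 : ℤ) := by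
    have : ((a:ℤ) - ((a:ℕ)+1 : ℕ)) = -1 := by push_cast; ring
    rwa [this] at h1
  have h3 : (n:ℤ) ∣ (1 : ℤ) := (dvd_neg).mp h2
  have := Int.le_of_dvd one_pos h3
  omega

lemma hasGradientAt_quad {m : ℕ} (a : EuclideanSpace ℝ (Fin m)) (c C : ℝ)
    (x : EuclideanSpace ℝ (Fin m)) :
    HasGradientAt (fun z => ⟪a, z⟫ + c / 2 * ‖z‖ ^ 2 + C) (a + c • x) x := by
  rw [hasGradientAt_iff_hasFDerivAt]
  have h1 : HasFDerivAt (fun z : EuclideanSpace ℝ (Fin m) => ⟪a, z⟫) (innerSL ℝ a) x :=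
    (innerSL ℝ a).hasFDerivAt
  have h2 : HasFDerivAt (fun z : EuclideanSpace ℝ (Fin m) => ‖z‖ ^ 2)
      (2 • (innerSL ℝ x)) x := by
    simpa using (hasFDerivAt_id x).norm_sq
  have h3 := (h1.add ((h2.const_mul (c / 2)).add_const C))
  have hfun : (fun z : EuclideanSpace ℝ (Fin m) => ⟪a, z⟫ + c / 2 * ‖z‖ ^ 2 + C)
      = fun z => ⟪a, z⟫ + (c / 2 * ‖z‖ ^ 2 + C) := by funext z; ring
  rw [hfun]
  have hder : (InnerProductSpace.toDual ℝ (EuclideanSpace ℝ (Fin m))) (a + c • x)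
      = innerSL ℝ a + (c / 2) • 2 • (innerSL ℝ x) := by
    ext z
    simp [InnerProductSpace.toDual_apply_apply, inner_add_left, real_inner_smul_left, two_smul]
    ring
  rw [hder]
  exact h3

lemma solve_system {m : ℕ} (K₁ K₂ : ℕ) (α β : ℝ) (hα : 0 < α) (hβ : 0 < β)
    (Bf Bt : EuclideanSpace ℝ (Fin m) → EuclideanSpace ℝ (Fin m))
    (hBadd : ∀ v w, Bf (v + w) = Bf v + Bf w)
    (hBsmul : ∀ (c : ℝ) v, Bf (c • v) = c • Bf v)
    (hBtadd : ∀ v w, Bt (v + w) = Bt v + Bt w)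
    (hBtsmul : ∀ (c : ℝ) v, Bt (c • v) = c • Bt v)
    (hadj : ∀ u v, ⟪Bf v, u⟫ = ⟪Bt u, v⟫)
    (hB : ∀ v ∈ Fspan m K₂, Bf v ∈ Fspan m K₁)
    (hBt : ∀ u ∈ Fspan m K₁, Bt u ∈ Fspan m K₂)
    (q₁ q₂ : EuclideanSpace ℝ (Fin m)) (hq₁ : q₁ ∈ Fspan m K₁) (hq₂ : q₂ ∈ Fspan m K₂) :
    ∃ u v, (α • u + Bf v = q₁ ∧ Bt u - β • v = q₂) ∧ u ∈ Fspan m K₁ ∧ v ∈ Fspan m K₂ ∧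
      ∀ u' v', (α • u' + Bf v' = q₁ ∧ Bt u' - β • v' = q₂) → u' = u ∧ v' = v := by
  let A : (EuclideanSpace ℝ (Fin m) × EuclideanSpace ℝ (Fin m)) →ₗ[ℝ]
      (EuclideanSpace ℝ (Fin m) × EuclideanSpace ℝ (Fin m)) :=
    { toFun := fun p => (α • p.1 + Bf p.2, Bt p.1 - β • p.2)
      map_add' := by
        intro p q
        simp only [Prod.fst_add, Prod.snd_add, hBadd, hBtadd, Prod.mk_add_mk, Prod.mk.injEq]
        constructor <;> module
      map_smul' := by
        intro c p
        simp only [Prod.smul_fst, Prod.smul_snd, hBsmul, hBtsmul, RingHom.id_apply,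
          Prod.smul_mk, Prod.mk.injEq]
        constructor <;> module }
  have hinj : Function.Injective A := by
    rw [← LinearMap.ker_eq_bot, LinearMap.ker_eq_bot']
    intro p hp
    have e1 : α • p.1 + Bf p.2 = 0 := congrArg Prod.fst hp
    have e2 : Bt p.1 - β • p.2 = 0 := congrArg Prod.snd hp
    have i1 : α * ‖p.1‖ ^ 2 + ⟪Bf p.2, p.1⟫ = 0 := by
      have := congrArg (fun w => ⟪w, p.1⟫) e1
      simpa only [inner_add_left, real_inner_smul_left, real_inner_self_eq_norm_sq,
        inner_zero_left] using this
    have i2 : ⟪Bt p.1, p.2⟫ - β * ‖p.2‖ ^ 2 = 0 := by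
      have := congrArg (fun w => ⟪w, p.2⟫) e2
      simpa only [inner_sub_left, real_inner_smul_left, real_inner_self_eq_norm_sq,
        inner_zero_left] using this
    have hkey : α * ‖p.1‖ ^ 2 + β * ‖p.2‖ ^ 2 = 0 := by
      have := hadj p.1 p.2
      nlinarith [i1, i2]
    have h1 : ‖p.1‖ ^ 2 = 0 := by nlinarith [sq_nonneg ‖p.1‖, sq_nonneg ‖p.2‖]
    have h2 : ‖p.2‖ ^ 2 = 0 := by nlinarith [sq_nonneg ‖p.1‖, sq_nonneg ‖p.2‖]
    have h1' : p.1 = 0 :=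
      norm_eq_zero.mp (by simpa using (pow_eq_zero_iff (n := 2) (by norm_num)).mp h1)
    have h2' : p.2 = 0 :=
      norm_eq_zero.mp (by simpa using (pow_eq_zero_iff (n := 2) (by norm_num)).mp h2)
    exact Prod.ext h1' h2'
  let W : Submodule ℝ (EuclideanSpace ℝ (Fin m) × EuclideanSpace ℝ (Fin m)) :=
    (Fspan m K₁).prod (Fspan m K₂)
  have hmaps : ∀ p ∈ W, A p ∈ W := by
    rintro ⟨u, v⟩ ⟨hu, hv⟩
    exact ⟨Submodule.add_mem _ (Submodule.smul_mem _ _ hu) (hB v hv),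
      Submodule.sub_mem _ (hBt u hu) (Submodule.smul_mem _ _ hv)⟩
  let A' : W →ₗ[ℝ] W := A.restrict hmaps
  have hinj' : Function.Injective A' := by
    intro z w hzw
    have : A z.1 = A w.1 := congrArg Subtype.val hzw
    exact Subtype.ext (hinj this)
  have hsurj : Function.Surjective A' := (LinearMap.injective_iff_surjective).mp hinj'
  obtain ⟨⟨p, hp⟩, hAp⟩ := hsurj ⟨(q₁, q₂), ⟨hq₁, hq₂⟩⟩
  have hApv : A p = (q₁, q₂) := congrArg Subtype.val hAp
  refine ⟨p.1, p.2, ⟨congrArg Prod.fst hApv, congrArg Prod.snd hApv⟩, hp.1, hp.2, ?_⟩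
  intro u' v' ⟨h1, h2⟩
  have heq : A (u', v') = A p := by
    rw [hApv]; exact Prod.ext h1 h2
  have := hinj heq
  exact ⟨congrArg Prod.fst this, congrArg Prod.snd this⟩

lemma branch {m : ℕ} (K₁ K₂ : ℕ) (c₁ c₂ γ : ℝ) (hγ : 0 < γ) (hc₁ : 0 ≤ c₁) (hc₂ : 0 ≤ c₂)
    (g : EuclideanSpace ℝ (Fin m) → EuclideanSpace ℝ (Fin m) → ℝ)
    (Bf Bt : EuclideanSpace ℝ (Fin m) → EuclideanSpace ℝ (Fin m))
    (d : EuclideanSpace ℝ (Fin m))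
    (hgx : ∀ x' y', gradient (fun z => g z y') x' = Bf y' + c₁ • x' - d)
    (hgy : ∀ x' y', gradient (fun z => g x' z) y' = Bt x' - c₂ • y')
    (hBadd : ∀ v w, Bf (v + w) = Bf v + Bf w)
    (hBsmul : ∀ (c : ℝ) v, Bf (c • v) = c • Bf v)
    (hBtadd : ∀ v w, Bt (v + w) = Bt v + Bt w)
    (hBtsmul : ∀ (c : ℝ) v, Bt (c • v) = c • Bt v)
    (hadj : ∀ u v, ⟪Bf v, u⟫ = ⟪Bt u, v⟫)
    (hB : ∀ v ∈ Fspan m K₂, Bf v ∈ Fspan m K₁)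
    (hBt : ∀ u ∈ Fspan m K₁, Bt u ∈ Fspan m K₂)
    (x y : EuclideanSpace ℝ (Fin m)) (hx : x ∈ Fspan m K₁) (hy : y ∈ Fspan m K₂)
    (hd : d ∈ Fspan m K₁) :
    gradient (fun x' => g x' y) x ∈ Fspan m K₁ ∧
    gradient (fun y' => g x y') y ∈ Fspan m K₂ ∧
    ∃ u v,
      (gradient (fun x' => g x' v) u + (1 / γ) • (u - x) = 0 ∧
       gradient (fun y' => g u y') v - (1 / γ) • (v - y) = 0) ∧
      u ∈ Fspan m K₁ ∧ v ∈ Fspan m K₂ ∧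
      ∀ u' v',
        (gradient (fun x' => g x' v') u' + (1 / γ) • (u' - x) = 0 ∧
         gradient (fun y' => g u' y') v' - (1 / γ) • (v' - y) = 0) →
        u' = u ∧ v' = v := by
  have hα : 0 < c₁ + 1 / γ := by positivity
  have hβ : 0 < c₂ + 1 / γ := by positivity
  have e1 : ∀ u v : EuclideanSpace ℝ (Fin m),
      Bf v + c₁ • u - d + (1 / γ) • (u - x)
        = ((c₁ + 1 / γ) • u + Bf v) - (d + (1 / γ) • x) := by
    intro u v; module
  have e2 : ∀ u v : EuclideanSpace ℝ (Fin m),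
      Bt u - c₂ • v - (1 / γ) • (v - y)
        = (Bt u - (c₂ + 1 / γ) • v) - (-((1 / γ) • y)) := by
    intro u v; module
  refine ⟨?_, ?_, ?_⟩
  · rw [hgx]
    exact Submodule.sub_mem _ (Submodule.add_mem _ (hB y hy) (Submodule.smul_mem _ _ hx)) hd
  · rw [hgy]
    exact Submodule.sub_mem _ (hBt x hx) (Submodule.smul_mem _ _ hy)
  · obtain ⟨u, v, ⟨h1, h2⟩, hu, hv, huniq⟩ :=
      solve_system K₁ K₂ (c₁ + 1 / γ) (c₂ + 1 / γ) hα hβ Bf Bt hBadd hBsmul hBtadd hBtsmul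
        hadj hB hBt (d + (1 / γ) • x) (-((1 / γ) • y))
        (Submodule.add_mem _ hd (Submodule.smul_mem _ _ hx))
        (Submodule.neg_mem _ (Submodule.smul_mem _ _ hy))
    refine ⟨u, v, ⟨?_, ?_⟩, hu, hv, ?_⟩
    · rw [hgx, e1, sub_eq_zero]; exact h1
    · rw [hgy, e2, sub_eq_zero]; exact h2
    · intro u' v' ⟨h1', h2'⟩
      rw [hgx, e1, sub_eq_zero] at h1'
      rw [hgy, e2, sub_eq_zero] at h2'
      exact huniq u' v' ⟨h1', h2'⟩

/-- Zero-respecting behaviour of partial gradients and the saddle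
proximal step for the bilinear convex–concave decomposition `r̃_i`: for
`(x,y) ∈ F_k × F_{k−1}` (`F_{−1} = F_0`) and `1 ≤ i ≤ n`, if `i ≡ k+1 (mod n)` then the
partial gradients lie in `F_{k+1} × F_k` and the unique stationary pair `(u,v)` of the
proximal system lies in `F_{k+1} × F_k`; otherwise everything stays in `F_k × F_{k−1}`. -/
theorem decomposition_convex_concave_zero_chain
    (n m : ℕ) (hn : 2 ≤ n) (hm : 2 ≤ m)
    (ζ c₁ c₂ : ℝ) (hc₁ : 0 ≤ c₁) (hc₂ : 0 ≤ c₂) (hζ : 0 ≤ ζ ∧ ζ ≤ Real.sqrt 2)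
    (b : ℕ → EuclideanSpace ℝ (Fin m))
    (hb0 : b 0 = 0)
    (hbl : ∀ (l : ℕ) (_h1 : 1 ≤ l) (_h2 : l ≤ m - 1),
      b l = EuclideanSpace.single (⟨l - 1, by omega⟩ : Fin m) 1
            - EuclideanSpace.single (⟨l, by omega⟩ : Fin m) 1)
    (hbm : b m = ζ • EuclideanSpace.single (⟨m - 1, by omega⟩ : Fin m) 1)
    (r : ℕ → EuclideanSpace ℝ (Fin m) → EuclideanSpace ℝ (Fin m) → ℝ)
    (hr : ∀ i : ℕ, 1 ≤ i → i ≤ n → ∀ x y,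
      r i x y = (n : ℝ) *
          (∑ l : Fin m,
            if ((l : ℕ) + 1) % n = (i - 1) % n then y l * ⟪b ((l : ℕ) + 1), x⟫ else 0)
        + (c₁ / 2) * ‖x‖ ^ 2 - (c₂ / 2) * ‖y‖ ^ 2
        - (if i = 1 then (n : ℝ) * x ⟨0, by omega⟩ else 0))
    (k : ℕ) (hk : k < m)
    (x y : EuclideanSpace ℝ (Fin m)) (hx : x ∈ Fspan m k) (hy : y ∈ Fspan m (k - 1))
    (γ : ℝ) (hγ : 0 < γ) (i : ℕ) (hi1 : 1 ≤ i) (hin : i ≤ n) :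
    (i % n = (k + 1) % n →
      gradient (fun x' => r i x' y) x ∈ Fspan m (k + 1) ∧
      gradient (fun y' => r i x y') y ∈ Fspan m k ∧
      ∃ u v,
        (gradient (fun x' => r i x' v) u + (1 / γ) • (u - x) = 0 ∧
         gradient (fun y' => r i u y') v - (1 / γ) • (v - y) = 0) ∧
        u ∈ Fspan m (k + 1) ∧ v ∈ Fspan m k ∧
        ∀ u' v',
          (gradient (fun x' => r i x' v') u' + (1 / γ) • (u' - x) = 0 ∧
           gradient (fun y' => r i u' y') v' - (1 / γ) • (v' - y) = 0) →
          u' = u ∧ v' = v) ∧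
    (¬ i % n = (k + 1) % n →
      gradient (fun x' => r i x' y) x ∈ Fspan m k ∧
      gradient (fun y' => r i x y') y ∈ Fspan m (k - 1) ∧
      ∃ u v,
        (gradient (fun x' => r i x' v) u + (1 / γ) • (u - x) = 0 ∧
         gradient (fun y' => r i u y') v - (1 / γ) • (v - y) = 0) ∧
        u ∈ Fspan m k ∧ v ∈ Fspan m (k - 1) ∧
        ∀ u' v',
          (gradient (fun x' => r i x' v') u' + (1 / γ) • (u' - x) = 0 ∧
           gradient (fun y' => r i u' y') v' - (1 / γ) • (v' - y) = 0) →
          u' = u ∧ v' = v) := by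
  set Bf : EuclideanSpace ℝ (Fin m) → EuclideanSpace ℝ (Fin m) :=
    fun v => (n : ℝ) • ∑ l : Fin m,
      if ((l : ℕ) + 1) % n = (i - 1) % n then v l • b ((l : ℕ) + 1) else 0 with hBfdef
  set Bt : EuclideanSpace ℝ (Fin m) → EuclideanSpace ℝ (Fin m) :=
    fun u => (n : ℝ) • ∑ l : Fin m,
      if ((l : ℕ) + 1) % n = (i - 1) % n then
        ⟪b ((l : ℕ) + 1), u⟫ • EuclideanSpace.single l (1:ℝ) else 0 with hBtdef
  set d : EuclideanSpace ℝ (Fin m) :=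
    if i = 1 then (n : ℝ) • EuclideanSpace.single (⟨0, by omega⟩ : Fin m) (1:ℝ) else 0
    with hddef
  -- gradient in x
  have hgx : ∀ x' y', gradient (fun z => r i z y') x' = Bf y' + c₁ • x' - d := by
    intro x' y'
    have hinner : ∀ z, ⟪Bf y' - d, z⟫
        = (n : ℝ) * (∑ l : Fin m,
            if ((l : ℕ) + 1) % n = (i - 1) % n then y' l * ⟪b ((l : ℕ) + 1), z⟫ else 0)
          - (if i = 1 then (n : ℝ) * z ⟨0, by omega⟩ else 0) := by
      intro z
      simp only [hBfdef, hddef]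
      rw [inner_sub_left]
      congr 1
      · rw [real_inner_smul_left, sum_inner]
        congr 1
        refine Finset.sum_congr rfl fun l _ => ?_
        split
        · exact real_inner_smul_left _ _ _
        · simp
      · split
        · rw [real_inner_smul_left, EuclideanSpace.inner_single_left]
          simp
        · simp
    have hfun : (fun z => r i z y')
        = fun z => ⟪Bf y' - d, z⟫ + c₁ / 2 * ‖z‖ ^ 2 + (-(c₂ / 2 * ‖y'‖ ^ 2)) := by
      funext z
      rw [hr i hi1 hin z y', hinner z]
      ring
    rw [hfun, (hasGradientAt_quad (Bf y' - d) c₁ _ x').gradient]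
    module
  -- gradient in y
  have hgy : ∀ x' y', gradient (fun z => r i x' z) y' = Bt x' - c₂ • y' := by
    intro x' y'
    have hinner : ∀ z : EuclideanSpace ℝ (Fin m), ⟪Bt x', z⟫
        = (n : ℝ) * (∑ l : Fin m,
            if ((l : ℕ) + 1) % n = (i - 1) % n then z l * ⟪b ((l : ℕ) + 1), x'⟫ else 0) := by
      intro z
      simp only [hBtdef]
      rw [real_inner_smul_left, sum_inner]
      congr 1
      refine Finset.sum_congr rfl fun l _ => ?_
      split
      · rw [real_inner_smul_left, EuclideanSpace.inner_single_left]
        simp only [map_one, one_mul]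
        ring
      · simp
    have hfun : (fun z => r i x' z)
        = fun z => ⟪Bt x', z⟫ + (-c₂) / 2 * ‖z‖ ^ 2
            + (c₁ / 2 * ‖x'‖ ^ 2 - (if i = 1 then (n : ℝ) * x' ⟨0, by omega⟩ else 0)) := by
      funext z
      rw [hr i hi1 hin x' z, hinner z]
      ring
    rw [hfun, (hasGradientAt_quad (Bt x') (-c₂) _ y').gradient]
    module
  -- linearity
  have hBadd : ∀ v w, Bf (v + w) = Bf v + Bf w := by
    intro v w
    simp only [hBfdef, ← smul_add, ← Finset.sum_add_distrib]
    congr 1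
    refine Finset.sum_congr rfl fun l _ => ?_
    split
    · rw [PiLp.add_apply, add_smul]
    · simp
  have hBsmul : ∀ (c : ℝ) v, Bf (c • v) = c • Bf v := by
    intro c v
    have hsum : (∑ l : Fin m,
        if ((l : ℕ) + 1) % n = (i - 1) % n then (c • v) l • b ((l : ℕ) + 1) else 0)
        = c • ∑ l : Fin m,
            if ((l : ℕ) + 1) % n = (i - 1) % n then v l • b ((l : ℕ) + 1) else 0 := by
      rw [Finset.smul_sum]
      refine Finset.sum_congr rfl fun l _ => ?_
      split
      · rw [PiLp.smul_apply, smul_eq_mul, ← smul_smul]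
      · simp
    simp only [hBfdef]
    rw [hsum, smul_comm]
  have hBtadd : ∀ v w, Bt (v + w) = Bt v + Bt w := by
    intro v w
    simp only [hBtdef, ← smul_add, ← Finset.sum_add_distrib]
    congr 1
    refine Finset.sum_congr rfl fun l _ => ?_
    split
    · rw [inner_add_right, add_smul]
    · simp
  have hBtsmul : ∀ (c : ℝ) v, Bt (c • v) = c • Bt v := by
    intro c v
    have hsum : (∑ l : Fin m,
        if ((l : ℕ) + 1) % n = (i - 1) % n then
          ⟪b ((l : ℕ) + 1), c • v⟫ • EuclideanSpace.single l (1:ℝ) else 0)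
        = c • ∑ l : Fin m,
            if ((l : ℕ) + 1) % n = (i - 1) % n then
              ⟪b ((l : ℕ) + 1), v⟫ • EuclideanSpace.single l (1:ℝ) else 0 := by
      rw [Finset.smul_sum]
      refine Finset.sum_congr rfl fun l _ => ?_
      split
      · rw [real_inner_smul_right, ← smul_smul]
      · simp
    simp only [hBtdef]
    rw [hsum, smul_comm]
  -- adjoint
  have hadj : ∀ u v, ⟪Bf v, u⟫ = ⟪Bt u, v⟫ := by
    intro u v
    simp only [hBfdef, hBtdef]
    rw [real_inner_smul_left, real_inner_smul_left, sum_inner, sum_inner]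
    congr 1
    refine Finset.sum_congr rfl fun l _ => ?_
    split
    · rw [real_inner_smul_left, real_inner_smul_left, EuclideanSpace.inner_single_left]
      simp only [map_one, one_mul]
      ring
    · simp
  -- vanishing inner products
  have hinner0 : ∀ (K : ℕ) (u : EuclideanSpace ℝ (Fin m)), u ∈ Fspan m K →
      ∀ l : Fin m, K ≤ (l : ℕ) → ⟪b ((l : ℕ) + 1), u⟫ = 0 := by
    intro K u hu l hl
    have hlt := l.isLt
    by_cases hlm : (l : ℕ) + 1 ≤ m - 1
    · rw [hbl ((l : ℕ) + 1) (by omega) hlm]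
      rw [inner_sub_left, EuclideanSpace.inner_single_left, EuclideanSpace.inner_single_left]
      rw [apply_eq_zero_of_mem_Fspan hu (⟨(l : ℕ) + 1 - 1, by omega⟩ : Fin m)
          ((by omega : K ≤ (l : ℕ) + 1 - 1)),
        apply_eq_zero_of_mem_Fspan hu (⟨(l : ℕ) + 1, by omega⟩ : Fin m)
          ((by omega : K ≤ (l : ℕ) + 1))]
      simp
    · have hlm' : (l : ℕ) + 1 = m := by omega
      rw [hlm', hbm, real_inner_smul_left, EuclideanSpace.inner_single_left,
        apply_eq_zero_of_mem_Fspan hu (⟨m - 1, by omega⟩ : Fin m)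
          ((by omega : K ≤ m - 1))]
      simp
  -- Bf maps Fspan K into Fspan K'
  have hB_gen : ∀ (K K' : ℕ), (∀ a : ℕ, a < K → a + 1 < K') →
      ∀ v, v ∈ Fspan m K → Bf v ∈ Fspan m K' := by
    intro K K' hKK' v hv
    simp only [hBfdef]
    refine Submodule.smul_mem _ _ (Submodule.sum_mem _ fun l _ => ?_)
    have hlt := l.isLt
    split
    · by_cases hlK : (l : ℕ) < K
      · refine Submodule.smul_mem _ _ ?_
        by_cases hlm : (l : ℕ) + 1 ≤ m - 1
        · rw [hbl ((l : ℕ) + 1) (by omega) hlm]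
          refine Submodule.sub_mem _ (single_mem_Fspan _ ?_) (single_mem_Fspan _ ?_)
          · show (l : ℕ) + 1 - 1 < K'
            have := hKK' _ hlK; omega
          · show (l : ℕ) + 1 < K'
            exact hKK' _ hlK
        · have hlm' : (l : ℕ) + 1 = m := by omega
          rw [hlm', hbm]
          refine Submodule.smul_mem _ _ (single_mem_Fspan _ ?_)
          show m - 1 < K'
          have := hKK' _ hlK; omega
      · rw [apply_eq_zero_of_mem_Fspan hv l (by omega), zero_smul]
        exact Submodule.zero_mem _
    · exact Submodule.zero_mem _
  -- Bt maps, with a congruence-type side condition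
  have hBt_gen : ∀ (K₁ K₂ : ℕ),
      (∀ l : Fin m, K₂ ≤ (l : ℕ) → (l : ℕ) < K₁ →
        ¬ ((l : ℕ) + 1) % n = (i - 1) % n) →
      ∀ u, u ∈ Fspan m K₁ → Bt u ∈ Fspan m K₂ := by
    intro K₁ K₂ hside u hu
    simp only [hBtdef]
    refine Submodule.smul_mem _ _ (Submodule.sum_mem _ fun l _ => ?_)
    split
    · rename_i hP
      by_cases hlK : (l : ℕ) < K₂
      · exact Submodule.smul_mem _ _ (single_mem_Fspan _ hlK)
      · by_cases hlK1 : (l : ℕ) < K₁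
        · exact absurd hP (hside l (by omega) hlK1)
        · rw [hinner0 K₁ u hu l (by omega), zero_smul]
          exact Submodule.zero_mem _
    · exact Submodule.zero_mem _
  constructor
  · -- congruent case
    intro hcg
    refine branch (k + 1) k c₁ c₂ γ hγ hc₁ hc₂ (r i) Bf Bt d hgx hgy hBadd hBsmul hBtadd
      hBtsmul hadj (hB_gen k (k + 1) (fun a ha => by omega)) ?_ x y
      (Fspan_mono m (by omega) hx) (Fspan_mono m (by omega) hy) ?_
    · refine hBt_gen (k + 1) k (fun l hl1 hl2 hP => ?_)
      have hlk : (l : ℕ) = k := by omega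
      have : ((i - 1) + 1) % n = (i - 1) % n := by
        rw [Nat.sub_add_cancel hi1, hcg, ← hlk, hP]
      exact succ_mod_ne hn (i - 1) this
    · rw [hddef]
      split
      · exact Submodule.smul_mem _ _ (single_mem_Fspan _ (show (0:ℕ) < k + 1 by omega))
      · exact Submodule.zero_mem _
  · -- non-congruent case
    intro hncg
    refine branch k (k - 1) c₁ c₂ γ hγ hc₁ hc₂ (r i) Bf Bt d hgx hgy hBadd hBsmul hBtadd
      hBtsmul hadj (hB_gen (k - 1) k (fun a ha => by omega)) ?_ x y hx hy ?_
    · refine hBt_gen k (k - 1) (fun l hl1 hl2 hP => ?_)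
      have hlk : (l : ℕ) = k - 1 := by omega
      have hk1 : 1 ≤ k := by omega
      have hPk : k % n = (i - 1) % n := by
        rw [hlk, Nat.sub_add_cancel hk1] at hP; exact hP
      have h2 : (k + 1) % n = ((i - 1) + 1) % n := Nat.ModEq.add_right 1 hPk
      rw [Nat.sub_add_cancel hi1] at h2
      exact hncg h2.symm
    · rw [hddef]
      by_cases hI : i = 1
      · rw [if_pos hI]
        have hk0 : 0 < k := by
          by_contra h
          apply hncg
          subst hI
          have hk00 : k = 0 := by omega
          rw [hk00]
        exact Submodule.smul_mem _ _ (single_mem_Fspan _ hk0)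
      · rw [if_neg hI]
        exact Submodule.zero_mem _
end
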